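/- (Pressure Poisson equation (1.16).) Let a, b, c ∈ ℝ, let U ⊆ ℝ³×ℝ be open, and let (u, P, Q) : U → ℝ³×ℝ×𝒮₀ be a smooth solution of the co-rotational Beris–Edwards system (i)–(iii) on U. Then pointwise on U: ΔP = −∑_{α,β=1}^3 ∂_α∂_β ( u_α u_β + ∂_αQ:∂_βQ − ½|∇Q|² δ_{αβ} ), where all derivatives are in the space variable and |∇Q|² := ∑_α ∂_αQ:∂_αQ. -/

import Mathlib

noncomputable section
open Matrix

/-- Euclidean 3-space. -/
abbrev E3 : Type := EuclideanSpace ℝ (Fin 3)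
/-- Real 3×3 matrices. -/
abbrev M3 : Type := Matrix (Fin 3) (Fin 3) ℝ

/-- Spatial partial derivative `∂_α f` of a scalar function on `ℝ³ × ℝ`. -/
def pdx (α : Fin 3) (f : E3 × ℝ → ℝ) (p : E3 × ℝ) : ℝ :=
  fderiv ℝ (fun y => f (y, p.2)) p.1 (EuclideanSpace.single α 1)

/-- Time derivative `∂_t f` of a scalar function on `ℝ³ × ℝ`. -/
def pdt (f : E3 × ℝ → ℝ) (p : E3 × ℝ) : ℝ := deriv (fun s => f (p.1, s)) p.2

/-- Spatial Laplacian `Δf` of a scalar function on `ℝ³ × ℝ`. -/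
def lapx (f : E3 × ℝ → ℝ) (p : E3 × ℝ) : ℝ := ∑ α, pdx α (fun q => pdx α f q) p

/-- The Landau–De Gennes bulk force
`f_LdG(Q) = aQ − b(Q² − (tr(Q²)/3)I₃) + c·tr(Q²)·Q`. -/
def fLdG (a b c : ℝ) (Q : M3) : M3 :=
  a • Q - b • (Q * Q - ((Q * Q).trace / 3) • (1 : M3)) + (c * (Q * Q).trace) • Q

/-- Vorticity `ω = (∇u − (∇u)ᵀ)/2`, with `(∇u)_{αβ} = ∂_β u_α`. -/
def omg (u : E3 × ℝ → Fin 3 → ℝ) (p : E3 × ℝ) (α β : Fin 3) : ℝ :=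
  (pdx β (fun q => u q α) p - pdx α (fun q => u q β) p) / 2

/-- Molecular field `H = ΔQ − f_LdG(Q)` (entrywise). -/
def Hmat (a b c : ℝ) (Q : E3 × ℝ → M3) (p : E3 × ℝ) (γ δ : Fin 3) : ℝ :=
  lapx (fun q => Q q γ δ) p - fLdG a b c (Q p) γ δ

/-!
Take the divergence of the momentum equation. Incompressibility removes `∂ₜ div u` and
`Δ div u` and turns the convection term into `div (u ⊗ u)`. Since `Q` and `H` are symmetric,
the stress `QH − HQ` is antisymmetric, so its double divergence vanishes. Finally `∇Q : ΔQ`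
is the divergence of the Ericksen stress `∂_αQ : ∂_βQ − ½|∇Q|² δ_αβ`, because the mixed
third derivatives it produces cancel by symmetry of second derivatives.
-/

open Filter Topology
open scoped ContDiff

theorem fderiv_apply_comm {E F : Type*} [NormedAddCommGroup E] [NormedSpace ℝ E]
    [NormedAddCommGroup F] [NormedSpace ℝ F] {f : E → F} {x : E} (hf : ContDiffAt ℝ 2 f x)
    (v w : E) :
    fderiv ℝ (fun y => fderiv ℝ f y v) x w = fderiv ℝ (fun y => fderiv ℝ f y w) x v := by
  have hd : DifferentiableAt ℝ (fderiv ℝ f) x :=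
    (hf.fderiv_right le_rfl).differentiableAt one_ne_zero
  simpa [fderiv_clm_apply hd (differentiableAt_const _)] using
    hf.isSymmSndFDerivAt (by simp [minSmoothness_of_isRCLikeNormedField]) w v

section PartialDerivatives

variable {U : Set (E3 × ℝ)} {p : E3 × ℝ} {f g : E3 × ℝ → ℝ}

def spatialUnit (α : Fin 3) : E3 × ℝ := (EuclideanSpace.single α 1, 0)

def timeUnit : E3 × ℝ := (0, 1)

theorem pdx_eq_fderiv (hf : DifferentiableAt ℝ f p) (α : Fin 3) :
    pdx α f p = fderiv ℝ f p (spatialUnit α) := by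
  have h : HasFDerivAt (fun y => f (y, p.2))
      ((fderiv ℝ f p).comp ((ContinuousLinearMap.id ℝ E3).prod 0)) p.1 :=
    hf.hasFDerivAt.comp p.1 ((hasFDerivAt_id p.1).prodMk (hasFDerivAt_const p.2 p.1))
  simp [pdx, h.fderiv, spatialUnit]

theorem pdt_eq_fderiv (hf : DifferentiableAt ℝ f p) : pdt f p = fderiv ℝ f p timeUnit :=
  (hf.hasFDerivAt.comp_hasDerivAt p.2
    ((hasDerivAt_const p.2 p.1).prodMk (hasDerivAt_id p.2))).deriv

theorem pdx_congr (h : f =ᶠ[𝓝 p] g) (α : Fin 3) : pdx α f p = pdx α g p := by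
  have h' : (fun y => f (y, p.2)) =ᶠ[𝓝 p.1] fun y => g (y, p.2) :=
    h.comp_tendsto (Continuous.prodMk_left p.2).continuousAt
  rw [pdx, pdx, h'.fderiv_eq]

theorem pdt_congr (h : f =ᶠ[𝓝 p] g) : pdt f p = pdt g p := by
  have h' : (fun s => f (p.1, s)) =ᶠ[𝓝 p.2] fun s => g (p.1, s) :=
    h.comp_tendsto (Continuous.prodMk_right p.1).continuousAt
  rw [pdt, pdt, h'.deriv_eq]

theorem pdx_const (α : Fin 3) (c : ℝ) : pdx α (fun _ => c) p = 0 := by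
  simp [pdx]

theorem pdt_const (c : ℝ) : pdt (fun _ => c) p = 0 := by
  simp [pdt]

theorem pdx_add (hf : DifferentiableAt ℝ f p) (hg : DifferentiableAt ℝ g p) (α : Fin 3) :
    pdx α (fun q => f q + g q) p = pdx α f p + pdx α g p := by
  simp [pdx_eq_fderiv, hf, hg, fderiv_fun_add hf hg]

theorem pdx_sub (hf : DifferentiableAt ℝ f p) (hg : DifferentiableAt ℝ g p) (α : Fin 3) :
    pdx α (fun q => f q - g q) p = pdx α f p - pdx α g p := by
  simp [pdx_eq_fderiv, hf, hg, fderiv_fun_sub hf hg]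

theorem pdx_neg (α : Fin 3) : pdx α (fun q => -f q) p = -pdx α f p := by
  simp [pdx, fderiv_fun_neg]

theorem pdx_mul (hf : DifferentiableAt ℝ f p) (hg : DifferentiableAt ℝ g p) (α : Fin 3) :
    pdx α (fun q => f q * g q) p = pdx α f p * g p + f p * pdx α g p := by
  simp [pdx_eq_fderiv, hf, hg, fderiv_fun_mul hf hg]
  ring

theorem pdx_sum {ι : Type*} {s : Finset ι} {F : ι → E3 × ℝ → ℝ}
    (hF : ∀ i ∈ s, DifferentiableAt ℝ (F i) p) (α : Fin 3) :
    pdx α (fun q => ∑ i ∈ s, F i q) p = ∑ i ∈ s, pdx α (F i) p := by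
  rw [pdx_eq_fderiv (DifferentiableAt.fun_sum hF), fderiv_fun_sum hF, _root_.sum_apply]
  exact Finset.sum_congr rfl fun i hi => (pdx_eq_fderiv (hF i hi) α).symm

theorem pdt_sum {ι : Type*} {s : Finset ι} {F : ι → E3 × ℝ → ℝ}
    (hF : ∀ i ∈ s, DifferentiableAt ℝ (F i) p) :
    pdt (fun q => ∑ i ∈ s, F i q) p = ∑ i ∈ s, pdt (F i) p := by
  rw [pdt_eq_fderiv (DifferentiableAt.fun_sum hF), fderiv_fun_sum hF, _root_.sum_apply]
  exact Finset.sum_congr rfl fun i hi => (pdt_eq_fderiv (hF i hi)).symm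

@[fun_prop]
theorem differentiableAt_of_contDiffOn (hU : IsOpen U) (hf : ContDiffOn ℝ ∞ f U) (hp : p ∈ U) :
    DifferentiableAt ℝ f p :=
  (hf.differentiableOn (by simp)).differentiableAt (hU.mem_nhds hp)

theorem pdx_congr_of_eqOn (hU : IsOpen U) (h : Set.EqOn f g U) (hp : p ∈ U) (α : Fin 3) :
    pdx α f p = pdx α g p :=
  pdx_congr (eventuallyEq_of_mem (hU.mem_nhds hp) h) α

theorem pdt_congr_of_eqOn (hU : IsOpen U) (h : Set.EqOn f g U) (hp : p ∈ U) :
    pdt f p = pdt g p :=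
  pdt_congr (eventuallyEq_of_mem (hU.mem_nhds hp) h)

theorem lapx_congr_of_eqOn (hU : IsOpen U) (h : Set.EqOn f g U) (hp : p ∈ U) :
    lapx f p = lapx g p :=
  Finset.sum_congr rfl fun α _ =>
    pdx_congr_of_eqOn hU (fun _ hq => pdx_congr_of_eqOn hU h hq α) hp α

theorem eqOn_pdx_fderiv (hU : IsOpen U) (hf : ContDiffOn ℝ ∞ f U) (α : Fin 3) :
    Set.EqOn (pdx α f) (fun q => fderiv ℝ f q (spatialUnit α)) U :=
  fun _ hq => pdx_eq_fderiv (differentiableAt_of_contDiffOn hU hf hq) α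

theorem eqOn_pdt_fderiv (hU : IsOpen U) (hf : ContDiffOn ℝ ∞ f U) :
    Set.EqOn (pdt f) (fun q => fderiv ℝ f q timeUnit) U :=
  fun _ hq => pdt_eq_fderiv (differentiableAt_of_contDiffOn hU hf hq)

theorem contDiffOn_fderiv_apply (hU : IsOpen U) (hf : ContDiffOn ℝ ∞ f U) (v : E3 × ℝ) :
    ContDiffOn ℝ ∞ (fun q => fderiv ℝ f q v) U :=
  (hf.fderiv_of_isOpen hU le_rfl).clm_apply contDiffOn_const

@[fun_prop]
theorem contDiffOn_pdx (hU : IsOpen U) (hf : ContDiffOn ℝ ∞ f U) (α : Fin 3) :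
    ContDiffOn ℝ ∞ (pdx α f) U :=
  (contDiffOn_fderiv_apply hU hf _).congr (eqOn_pdx_fderiv hU hf α)

@[fun_prop]
theorem contDiffOn_pdt (hU : IsOpen U) (hf : ContDiffOn ℝ ∞ f U) : ContDiffOn ℝ ∞ (pdt f) U :=
  (contDiffOn_fderiv_apply hU hf _).congr (eqOn_pdt_fderiv hU hf)

@[fun_prop]
theorem contDiffOn_lapx (hU : IsOpen U) (hf : ContDiffOn ℝ ∞ f U) : ContDiffOn ℝ ∞ (lapx f) U :=
  ContDiffOn.sum fun α _ => contDiffOn_pdx hU (contDiffOn_pdx hU hf α) α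

theorem fderiv_fderiv_apply_comm (hU : IsOpen U) (hf : ContDiffOn ℝ ∞ f U) (hp : p ∈ U)
    (v w : E3 × ℝ) :
    fderiv ℝ (fun q => fderiv ℝ f q v) p w = fderiv ℝ (fun q => fderiv ℝ f q w) p v :=
  fderiv_apply_comm ((hf.contDiffAt (hU.mem_nhds hp)).of_le (WithTop.coe_le_coe.mpr le_top)) v w

theorem pdx_pdx_comm (hU : IsOpen U) (hf : ContDiffOn ℝ ∞ f U) (hp : p ∈ U) (α β : Fin 3) :
    pdx α (pdx β f) p = pdx β (pdx α f) p := by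
  have hd := fun v => differentiableAt_of_contDiffOn hU (contDiffOn_fderiv_apply hU hf v) hp
  rw [pdx_congr_of_eqOn hU (eqOn_pdx_fderiv hU hf β) hp, pdx_eq_fderiv (hd _),
    pdx_congr_of_eqOn hU (eqOn_pdx_fderiv hU hf α) hp, pdx_eq_fderiv (hd _),
    fderiv_fderiv_apply_comm hU hf hp]

theorem pdx_pdt_comm (hU : IsOpen U) (hf : ContDiffOn ℝ ∞ f U) (hp : p ∈ U) (α : Fin 3) :
    pdx α (pdt f) p = pdt (pdx α f) p := by
  have hd := fun v => differentiableAt_of_contDiffOn hU (contDiffOn_fderiv_apply hU hf v) hp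
  rw [pdx_congr_of_eqOn hU (eqOn_pdt_fderiv hU hf) hp, pdx_eq_fderiv (hd _),
    pdt_congr_of_eqOn hU (eqOn_pdx_fderiv hU hf α) hp, pdt_eq_fderiv (hd _),
    fderiv_fderiv_apply_comm hU hf hp]

theorem eqOn_pdx_sum (hU : IsOpen U) {ι : Type*} {s : Finset ι} {F : ι → E3 × ℝ → ℝ}
    (hF : ∀ i ∈ s, ContDiffOn ℝ ∞ (F i) U) (α : Fin 3) :
    Set.EqOn (pdx α fun q => ∑ i ∈ s, F i q) (fun q => ∑ i ∈ s, pdx α (F i) q) U :=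
  fun _ hq => pdx_sum (fun i hi => differentiableAt_of_contDiffOn hU (hF i hi) hq) α

theorem lapx_sum (hU : IsOpen U) {ι : Type*} {s : Finset ι} {F : ι → E3 × ℝ → ℝ}
    (hF : ∀ i ∈ s, ContDiffOn ℝ ∞ (F i) U) (hp : p ∈ U) :
    lapx (fun q => ∑ i ∈ s, F i q) p = ∑ i ∈ s, lapx (F i) p := by
  simp only [lapx]
  rw [Finset.sum_comm]
  refine Finset.sum_congr rfl fun α _ => ?_
  rw [pdx_congr_of_eqOn hU (eqOn_pdx_sum hU hF α) hp,
    pdx_sum (fun i hi => differentiableAt_of_contDiffOn hU (contDiffOn_pdx hU (hF i hi) α) hp)]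

theorem pdx_lapx_comm (hU : IsOpen U) (hf : ContDiffOn ℝ ∞ f U) (hp : p ∈ U) (α : Fin 3) :
    pdx α (lapx f) p = lapx (pdx α f) p := by
  unfold lapx
  rw [pdx_sum (fun β _ => differentiableAt_of_contDiffOn hU (by fun_prop) hp)]
  refine Finset.sum_congr rfl fun β _ => ?_
  rw [pdx_pdx_comm hU (by fun_prop) hp,
    pdx_congr_of_eqOn hU (fun q hq => pdx_pdx_comm hU hf hq α β) hp]

end PartialDerivatives

section Divergence

variable {U : Set (E3 × ℝ)} {p : E3 × ℝ} {v : Fin 3 → E3 × ℝ → ℝ}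

theorem sum_pdx_lapx_eq_zero (hU : IsOpen U) (hv : ∀ α, ContDiffOn ℝ ∞ (v α) U)
    (hdiv : ∀ q ∈ U, ∑ α, pdx α (v α) q = 0) (hp : p ∈ U) :
    ∑ α, pdx α (lapx (v α)) p = 0 :=
  calc ∑ α, pdx α (lapx (v α)) p
      = ∑ α, lapx (pdx α (v α)) p :=
        Finset.sum_congr rfl fun α _ => pdx_lapx_comm hU (hv α) hp α
    _ = lapx (fun q => ∑ α, pdx α (v α) q) p :=
        (lapx_sum hU (fun α _ => contDiffOn_pdx hU (hv α) α) hp).symm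
    _ = lapx (fun _ => 0) p := lapx_congr_of_eqOn hU hdiv hp
    _ = 0 := by simp [lapx, pdx_const]

theorem sum_pdx_pdt_eq_zero (hU : IsOpen U) (hv : ∀ α, ContDiffOn ℝ ∞ (v α) U)
    (hdiv : ∀ q ∈ U, ∑ α, pdx α (v α) q = 0) (hp : p ∈ U) :
    ∑ α, pdx α (pdt (v α)) p = 0 :=
  calc ∑ α, pdx α (pdt (v α)) p
      = ∑ α, pdt (pdx α (v α)) p :=
        Finset.sum_congr rfl fun α _ => pdx_pdt_comm hU (hv α) hp α
    _ = pdt (fun q => ∑ α, pdx α (v α) q) p :=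
        (pdt_sum fun α _ => differentiableAt_of_contDiffOn hU (contDiffOn_pdx hU (hv α) α) hp).symm
    _ = pdt (fun _ => 0) p := pdt_congr_of_eqOn hU hdiv hp
    _ = 0 := pdt_const 0

theorem sum_pdx_pdx_eq_zero_of_antisymm (hU : IsOpen U) {S : Fin 3 → Fin 3 → E3 × ℝ → ℝ}
    (hS : ∀ α β, ContDiffOn ℝ ∞ (S α β) U) (hanti : ∀ q ∈ U, ∀ α β, S α β q = -S β α q)
    (hp : p ∈ U) :
    ∑ α, ∑ β, pdx α (pdx β (S α β)) p = 0 := by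
  have hswap : ∀ α β, pdx α (pdx β (S α β)) p = -pdx β (pdx α (S β α)) p := fun α β => by
    have hneg : Set.EqOn (pdx α (S α β)) (fun q => -pdx α (S β α) q) U := fun q hq => by
      rw [pdx_congr_of_eqOn hU (fun z hz => hanti z hz α β) hq, pdx_neg]
    rw [pdx_pdx_comm hU (hS α β) hp, pdx_congr_of_eqOn hU hneg hp, pdx_neg]
  have h : ∑ α, ∑ β, pdx α (pdx β (S α β)) p = -∑ α, ∑ β, pdx α (pdx β (S α β)) p :=
    calc ∑ α, ∑ β, pdx α (pdx β (S α β)) p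
        = ∑ α, ∑ β, -pdx β (pdx α (S β α)) p :=
          Finset.sum_congr rfl fun α _ => Finset.sum_congr rfl fun β _ => hswap α β
      _ = -∑ α, ∑ β, pdx α (pdx β (S α β)) p := by
          rw [Finset.sum_comm]
          simp only [Finset.sum_neg_distrib]
  linarith

theorem sum_mul_pdx_eq_sum_pdx_mul {q : E3 × ℝ} (hv : ∀ α, DifferentiableAt ℝ (v α) q)
    (hdiv : ∑ α, pdx α (v α) q = 0) (α : Fin 3) :
    ∑ β, v β q * pdx β (v α) q = ∑ β, pdx β (fun z => v α z * v β z) q := by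
  rw [Finset.sum_congr rfl fun β _ => pdx_mul (hv α) (hv β) β, Finset.sum_add_distrib,
    ← Finset.mul_sum, hdiv, mul_zero, add_zero]
  exact Finset.sum_congr rfl fun β _ => mul_comm _ _

end Divergence

section Ericksen

variable {U : Set (E3 × ℝ)} {p : E3 × ℝ} {ι : Type*} [Fintype ι] {F : ι → E3 × ℝ → ℝ}

def ericksenStress (F : ι → E3 × ℝ → ℝ) (α β : Fin 3) (z : E3 × ℝ) : ℝ :=
  ∑ i, pdx α (F i) z * pdx β (F i) z
    - 1 / 2 * (∑ μ, ∑ i, pdx μ (F i) z ^ 2) * (if α = β then 1 else 0)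

theorem sum_pdx_ericksenStress (hU : IsOpen U) (hF : ∀ i, ContDiffOn ℝ ∞ (F i) U) (hp : p ∈ U)
    (α : Fin 3) :
    ∑ β, pdx β (ericksenStress F α β) p = ∑ i, pdx α (F i) p * lapx (F i) p := by
  have hcomm : ∀ μ i, pdx α (pdx μ (F i)) p = pdx μ (pdx α (F i)) p :=
    fun μ i => pdx_pdx_comm hU (hF i) hp α μ
  unfold ericksenStress
  simp (disch := fun_prop (disch := assumption)) only [pdx_sub, pdx_mul, pdx_sum, pdx_const,
    pow_two]
  simp only [Finset.sum_sub_distrib, mul_zero, zero_mul, add_zero, mul_ite, mul_one,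
    Finset.sum_ite_eq, Finset.mem_univ, if_true, hcomm, Finset.sum_add_distrib, lapx,
    Finset.sum_mul, zero_add, mul_comm (pdx _ (F _) p)]
  conv_rhs => rw [Finset.sum_comm]
  ring

@[fun_prop]
theorem contDiffOn_ericksenStress (hU : IsOpen U) (hF : ∀ i, ContDiffOn ℝ ∞ (F i) U)
    (α β : Fin 3) : ContDiffOn ℝ ∞ (ericksenStress F α β) U := by
  unfold ericksenStress
  fun_prop (disch := assumption)

end Ericksen

theorem sum_mul_sub_mul_eq_neg_of_isSymm {n R : Type*} [Fintype n] [CommRing R]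
    {A B : Matrix n n R} (hA : A.IsSymm) (hB : B.IsSymm) (i j : n) :
    ∑ k, (A i k * B k j - B i k * A k j) = -∑ k, (A j k * B k i - B j k * A k i) := by
  rw [← Finset.sum_neg_distrib]
  refine Finset.sum_congr rfl fun k _ => ?_
  rw [hA.apply k j, hB.apply i k, hB.apply k j, hA.apply i k]
  ring

theorem Matrix.IsSymm.fLdG {M : M3} (hM : M.IsSymm) (a b c : ℝ) : (fLdG a b c M).IsSymm :=
  ((hM.smul a).sub (((by simpa [sq] using hM.pow 2 : (M * M).IsSymm).sub
    (isSymm_one.smul _)).smul b)).add (hM.smul _)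

section MolecularField

variable {U : Set (E3 × ℝ)} {Q : E3 × ℝ → M3}

theorem isSymm_hmat (hU : IsOpen U) (hQsym : ∀ q ∈ U, (Q q).IsSymm) (a b c : ℝ) {q : E3 × ℝ}
    (hq : q ∈ U) : Matrix.IsSymm (Hmat a b c Q q : M3) := by
  refine Matrix.IsSymm.ext fun i j => ?_
  simp only [Hmat, ((hQsym q hq).fLdG a b c).apply,
    lapx_congr_of_eqOn hU (fun z hz => (hQsym z hz).apply i j) hq]

theorem contDiffOn_hmat (hU : IsOpen U) (hQ : ∀ γ δ, ContDiffOn ℝ ∞ (fun q => Q q γ δ) U)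
    (a b c : ℝ) (γ δ : Fin 3) : ContDiffOn ℝ ∞ (fun q => Hmat a b c Q q γ δ) U := by
  simp only [Hmat, fLdG, Matrix.add_apply, Matrix.sub_apply, Matrix.smul_apply, Matrix.mul_apply,
    Matrix.trace, Matrix.diag, Matrix.one_apply, smul_eq_mul]
  fun_prop (disch := assumption)

end MolecularField

theorem lapx_eq_neg_sum_pdx_pdx_of_pdx_eq {U : Set (E3 × ℝ)} {p : E3 × ℝ} (hU : IsOpen U)
    {P : E3 × ℝ → ℝ} {v : Fin 3 → E3 × ℝ → ℝ} {σ T : Fin 3 → Fin 3 → E3 × ℝ → ℝ}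
    (hv : ∀ α, ContDiffOn ℝ ∞ (v α) U) (hσ : ∀ α β, ContDiffOn ℝ ∞ (σ α β) U)
    (hT : ∀ α β, ContDiffOn ℝ ∞ (T α β) U) (hσanti : ∀ q ∈ U, ∀ α β, σ α β q = -σ β α q)
    (hdiv : ∀ q ∈ U, ∑ α, pdx α (v α) q = 0)
    (hP : ∀ α, ∀ q ∈ U, pdx α P q
      = lapx (v α) q - pdt (v α) q + ∑ β, pdx β (σ α β) q - ∑ β, pdx β (T α β) q)
    (hp : p ∈ U) :
    lapx P p = -∑ α, ∑ β, pdx α (pdx β (T α β)) p :=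
  calc lapx P p
      = ∑ α, pdx α (fun q => lapx (v α) q - pdt (v α) q + ∑ β, pdx β (σ α β) q
          - ∑ β, pdx β (T α β) q) p :=
        Finset.sum_congr rfl fun α _ => pdx_congr_of_eqOn hU (hP α) hp α
    _ = ∑ α, pdx α (lapx (v α)) p - ∑ α, pdx α (pdt (v α)) p
          + ∑ α, ∑ β, pdx α (pdx β (σ α β)) p - ∑ α, ∑ β, pdx α (pdx β (T α β)) p := by
        simp (disch := fun_prop (disch := assumption)) only [pdx_sub, pdx_add, pdx_sum,
          Finset.sum_sub_distrib, Finset.sum_add_distrib]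
    _ = -∑ α, ∑ β, pdx α (pdx β (T α β)) p := by
        rw [sum_pdx_lapx_eq_zero hU hv hdiv hp, sum_pdx_pdt_eq_zero hU hv hdiv hp,
          sum_pdx_pdx_eq_zero_of_antisymm hU hσ hσanti hp]
        ring

theorem statement_15_general (a b c : ℝ) (U : Set (E3 × ℝ)) (hU : IsOpen U)
    (u : E3 × ℝ → Fin 3 → ℝ) (P : E3 × ℝ → ℝ) (Q : E3 × ℝ → M3)
    (hu : ∀ i, ContDiffOn ℝ (⊤ : ℕ∞) (fun p => u p i) U)
    (hQ : ∀ γ δ : Fin 3, ContDiffOn ℝ (⊤ : ℕ∞) (fun p => Q p γ δ) U)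
    (hQsym : ∀ p ∈ U, (Q p).IsSymm)
    (hequ : ∀ p ∈ U, ∀ α : Fin 3,
      pdt (fun q => u q α) p + (∑ β, u p β * pdx β (fun q => u q α) p) + pdx α P p
        = lapx (fun q => u q α) p
          - (∑ γ, ∑ δ, pdx α (fun q => Q q γ δ) p * lapx (fun q => Q q γ δ) p)
          + ∑ β, pdx β (fun q => ∑ γ,
              (Q q α γ * Hmat a b c Q q γ β - Hmat a b c Q q α γ * Q q γ β)) p)
    (hdiv : ∀ p ∈ U, (∑ α, pdx α (fun q => u q α) p) = 0) :
    ∀ p ∈ U,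
      lapx P p
        = -∑ α, ∑ β, pdx α (fun q => pdx β (fun z =>
            u z α * u z β
              + (∑ γ, ∑ δ, pdx α (fun w => Q w γ δ) z * pdx β (fun w => Q w γ δ) z)
              - 1 / 2 * (∑ μ, ∑ γ, ∑ δ, (pdx μ (fun w => Q w γ δ) z) ^ 2)
                * (if α = β then (1 : ℝ) else 0)) q) p := by
  intro p hp
  let F : Fin 3 × Fin 3 → E3 × ℝ → ℝ := fun i w => Q w i.1 i.2
  have hH := contDiffOn_hmat hU hQ a b c
  refine lapx_eq_neg_sum_pdx_pdx_of_pdx_eq hU (v := fun α q => u q α)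
    (σ := fun α β q => ∑ γ, (Q q α γ * Hmat a b c Q q γ β - Hmat a b c Q q α γ * Q q γ β))
    hu (fun α β => by fun_prop) (fun α β => by fun_prop (disch := assumption))
    (fun q hq => sum_mul_sub_mul_eq_neg_of_isSymm (hQsym q hq) (isSymm_hmat hU hQsym a b c hq))
    hdiv (fun α q hq => ?_) hp
  have hT : ∀ β, (fun z => u z α * u z β
        + (∑ γ, ∑ δ, pdx α (fun w => Q w γ δ) z * pdx β (fun w => Q w γ δ) z)
        - 1 / 2 * (∑ μ, ∑ γ, ∑ δ, (pdx μ (fun w => Q w γ δ) z) ^ 2)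
          * (if α = β then (1 : ℝ) else 0))
      = fun z => u z α * u z β + ericksenStress F α β z := fun β => by
    funext z
    simp only [F, ericksenStress, Fintype.sum_prod_type]
    ring
  have hstress := sum_pdx_ericksenStress hU (F := F) (fun i => hQ i.1 i.2) hq α
  simp only [F, Fintype.sum_prod_type] at hstress
  have hconv := sum_mul_pdx_eq_sum_pdx_mul (v := fun α q => u q α)
    (fun β => differentiableAt_of_contDiffOn hU (hu β) hq) (hdiv q hq) α
  simp (disch := fun_prop (disch := assumption)) only [hT, pdx_add, Finset.sum_add_distrib]
  linarith [hequ q hq α]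

/-- Pressure Poisson equation (1.16).
For a smooth solution `(u, P, Q)` of the co-rotational Beris–Edwards system on an open
`U ⊆ ℝ³×ℝ`, one has pointwise on `U`:
`ΔP = −∑_{α,β} ∂_α∂_β (u_α u_β + ∂_αQ:∂_βQ − ½|∇Q|² δ_{αβ})`. -/
theorem statement_15 (a b c : ℝ) (U : Set (E3 × ℝ)) (hU : IsOpen U)
    (u : E3 × ℝ → Fin 3 → ℝ) (P : E3 × ℝ → ℝ) (Q : E3 × ℝ → M3)
    (hu : ∀ i, ContDiffOn ℝ (⊤ : ℕ∞) (fun p => u p i) U)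
    (hP : ContDiffOn ℝ (⊤ : ℕ∞) P U)
    (hQ : ∀ γ δ : Fin 3, ContDiffOn ℝ (⊤ : ℕ∞) (fun p => Q p γ δ) U)
    (hQsym : ∀ p ∈ U, (Q p).IsSymm) (hQtr : ∀ p ∈ U, (Q p).trace = 0)
    (heqQ : ∀ p ∈ U, ∀ α β : Fin 3,
      pdt (fun q => Q q α β) p + (∑ γ, u p γ * pdx γ (fun q => Q q α β) p)
          - (∑ γ, omg u p α γ * Q p γ β) + (∑ γ, Q p α γ * omg u p γ β)
        = lapx (fun q => Q q α β) p - fLdG a b c (Q p) α β)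
    (hequ : ∀ p ∈ U, ∀ α : Fin 3,
      pdt (fun q => u q α) p + (∑ β, u p β * pdx β (fun q => u q α) p) + pdx α P p
        = lapx (fun q => u q α) p
          - (∑ γ, ∑ δ, pdx α (fun q => Q q γ δ) p * lapx (fun q => Q q γ δ) p)
          + ∑ β, pdx β (fun q => ∑ γ,
              (Q q α γ * Hmat a b c Q q γ β - Hmat a b c Q q α γ * Q q γ β)) p)
    (hdiv : ∀ p ∈ U, (∑ α, pdx α (fun q => u q α) p) = 0) :
    ∀ p ∈ U,
      lapx P p
        = -∑ α, ∑ β, pdx α (fun q => pdx β (fun z =>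
            u z α * u z β
              + (∑ γ, ∑ δ, pdx α (fun w => Q w γ δ) z * pdx β (fun w => Q w γ δ) z)
              - 1 / 2 * (∑ μ, ∑ γ, ∑ δ, (pdx μ (fun w => Q w γ δ) z) ^ 2)
                * (if α = β then (1 : ℝ) else 0)) q) p :=
  statement_15_general a b c U hU u P Q hu hQ hQsym hequ hdiv
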